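/- arXiv:1502.02386 — 2 statements merged into one kernel-verified Lean document; each statement's English description precedes it below -/
import Mathlib

section
/- Let ρ be a nonnegative Borel measure on ℝ, let α ∈ (0,2) and C̄ ≥ 0, and suppose that for every a > 0 one has ∫_{(−a,a)} |z|^2 ρ(dz) ≤ C̄ a^{2−α}. Then for every γ ∈ (α,2) and every a > 0, ∫_{[−a,a]} |z|^γ ρ(dz) ≤ C_{γ,α} C̄ a^{γ−α}, where C_{γ,α} = 2^{−γ+2} · 2^{2−α}/(2^{γ−α} − 1). -/
/-!
Split `[-a, a] \ {0}` into the dyadic shells `a / 2 ^ (n + 1) < |z| ≤ a / 2 ^ n`. On the `n`-th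
shell `|z| ^ γ ≤ (a / 2 ^ (n + 1)) ^ (γ - 2) |z| ^ 2` because `γ < 2`, and the hypothesis (passed to
closed intervals by right continuity of `c ↦ c ^ (2 - α)`) bounds the second moment of the shell by
`C̄ (a / 2 ^ n) ^ (2 - α)`. The resulting bounds form a geometric series of ratio `2 ^ (α - γ) < 1`.
-/

open MeasureTheory Set

open scoped ENNReal

lemma setLIntegral_Icc_le_of_forall_Ioo_le {ρ : Measure ℝ} {f g : ℝ → ℝ≥0∞} {c : ℝ}
    (hg : ContinuousWithinAt g (Ioi c) c)
    (h : ∀ b, c < b → ∫⁻ z in Ioo (-b) b, f z ∂ρ ≤ g b) :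
    ∫⁻ z in Icc (-c) c, f z ∂ρ ≤ g c :=
  ge_of_tendsto hg <| eventually_nhdsWithin_of_forall fun b (hb : c < b) =>
    (lintegral_mono_set (Icc_subset_Ioo (neg_lt_neg hb) hb)).trans (h b hb)

def dyadicShell (a : ℝ) (n : ℕ) : Set ℝ :=
  {z | a / 2 ^ (n + 1) < |z| ∧ |z| ≤ a / 2 ^ n}

lemma Icc_subset_insert_zero_iUnion_dyadicShell (a : ℝ) :
    Icc (-a) a ⊆ insert 0 (⋃ n, dyadicShell a n) := by
  intro z hz
  rcases eq_or_ne z 0 with rfl | hz0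
  · exact mem_insert 0 _
  have hzpos : 0 < |z| := abs_pos.mpr hz0
  have hza : 1 ≤ a / |z| := (one_le_div hzpos).mpr (abs_le.mpr hz)
  obtain ⟨n, hn, hn1⟩ := exists_nat_pow_near hza one_lt_two
  refine mem_insert_of_mem 0 (mem_iUnion.mpr ⟨n, ?_, ?_⟩)
  · exact (div_lt_iff₀ (by positivity)).mpr (by rwa [div_lt_iff₀ hzpos, mul_comm] at hn1)
  · exact (le_div_iff₀ (by positivity)).mpr (by rwa [le_div_iff₀ hzpos, mul_comm] at hn)

lemma setLIntegral_Icc_le_tsum_dyadicShell {ρ : Measure ℝ} {f : ℝ → ℝ≥0∞} (hf : f 0 = 0)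
    (a : ℝ) : ∫⁻ z in Icc (-a) a, f z ∂ρ ≤ ∑' n, ∫⁻ z in dyadicShell a n, f z ∂ρ :=
  calc ∫⁻ z in Icc (-a) a, f z ∂ρ
      ≤ ∫⁻ z in {0} ∪ ⋃ n, dyadicShell a n, f z ∂ρ :=
        lintegral_mono_set (Icc_subset_insert_zero_iUnion_dyadicShell a)
    _ ≤ ∫⁻ z in {0}, f z ∂ρ + ∫⁻ z in ⋃ n, dyadicShell a n, f z ∂ρ := lintegral_union_le _ _ _
    _ = ∫⁻ z in ⋃ n, dyadicShell a n, f z ∂ρ := by rw [lintegral_singleton, hf, zero_mul, zero_add]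
    _ ≤ ∑' n, ∫⁻ z in dyadicShell a n, f z ∂ρ := lintegral_iUnion_le _ _

lemma rpow_le_rpow_sub_two_mul_sq {r x γ : ℝ} (hr : 0 < r) (hrx : r ≤ x) (hγ : γ ≤ 2) :
    x ^ γ ≤ r ^ (γ - 2) * x ^ 2 := by
  have hx : 0 < x := hr.trans_le hrx
  calc x ^ γ = x ^ (γ - 2) * x ^ 2 := by
        rw [← Real.rpow_natCast, ← Real.rpow_add hx]; norm_num
    _ ≤ r ^ (γ - 2) * x ^ 2 := by
        gcongr ?_ * _
        exact Real.rpow_le_rpow_of_nonpos hr hrx (by linarith)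

lemma setLIntegral_dyadicShell_rpow_le {ρ : Measure ℝ} {a γ : ℝ} {B : ℝ≥0∞} (ha : 0 < a)
    (hγ : γ ≤ 2) (n : ℕ)
    (hB : ∫⁻ z in Icc (-(a / 2 ^ n)) (a / 2 ^ n), ENNReal.ofReal (|z| ^ 2) ∂ρ ≤ B) :
    ∫⁻ z in dyadicShell a n, ENNReal.ofReal (|z| ^ γ) ∂ρ ≤
      ENNReal.ofReal ((a / 2 ^ (n + 1)) ^ (γ - 2)) * B :=
  calc ∫⁻ z in dyadicShell a n, ENNReal.ofReal (|z| ^ γ) ∂ρ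
      ≤ ∫⁻ z in dyadicShell a n,
          ENNReal.ofReal ((a / 2 ^ (n + 1)) ^ (γ - 2)) * ENNReal.ofReal (|z| ^ 2) ∂ρ := by
        refine setLIntegral_mono (by fun_prop) fun z hz => ?_
        rw [← ENNReal.ofReal_mul (by positivity)]
        exact ENNReal.ofReal_le_ofReal
          (rpow_le_rpow_sub_two_mul_sq (by positivity) hz.1.le hγ)
    _ = ENNReal.ofReal ((a / 2 ^ (n + 1)) ^ (γ - 2)) *
          ∫⁻ z in dyadicShell a n, ENNReal.ofReal (|z| ^ 2) ∂ρ :=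
        lintegral_const_mul' _ _ ENNReal.ofReal_ne_top
    _ ≤ ENNReal.ofReal ((a / 2 ^ (n + 1)) ^ (γ - 2)) * B := by
        gcongr
        exact (lintegral_mono_set fun z hz => abs_le.mp hz.2).trans hB

lemma dyadic_rpow_mul_rpow_eq {a : ℝ} (ha : 0 < a) (α γ : ℝ) (n : ℕ) :
    (a / 2 ^ (n + 1)) ^ (γ - 2) * (a / 2 ^ n) ^ (2 - α) =
      2 ^ (2 - γ) * a ^ (γ - α) * ((2 ^ (γ - α))⁻¹) ^ n := by
  have hc : 0 < a / 2 ^ n := by positivity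
  rw [pow_succ, ← div_div, Real.div_rpow hc.le zero_le_two, div_mul_eq_mul_div,
    ← Real.rpow_add hc, Real.div_rpow ha.le (by positivity), ← Real.rpow_natCast_mul zero_le_two,
    mul_comm (n : ℝ), Real.rpow_mul_natCast zero_le_two, show γ - 2 + (2 - α) = γ - α by ring,
    ← neg_sub γ, Real.rpow_neg zero_le_two, inv_pow]
  ring

lemma tsum_ofReal_mul_inv_pow {K q : ℝ} (hK : 0 ≤ K) (hq : 1 < q) :
    ∑' n : ℕ, ENNReal.ofReal (K * q⁻¹ ^ n) = ENNReal.ofReal (K / (q - 1) * q) := by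
  have h0 : 0 ≤ q⁻¹ := inv_nonneg.mpr (zero_le_one.trans hq.le)
  have h1 : q⁻¹ < 1 := inv_lt_one_of_one_lt₀ hq
  rw [← ENNReal.ofReal_tsum_of_nonneg (fun n => by positivity)
    ((summable_geometric_of_lt_one h0 h1).mul_left K), tsum_mul_left,
    tsum_geometric_of_lt_one h0 h1]
  congr 1
  have : q - 1 ≠ 0 := sub_ne_zero.mpr hq.ne'
  field_simp

theorem statement1_general (ρ : Measure ℝ) (α Cbar : ℝ)
    (hα : 0 < α)
    (H : ∀ a : ℝ, 0 < a →
      ∫⁻ z in Set.Ioo (-a) a, ENNReal.ofReal (|z| ^ (2 : ℕ)) ∂ρ ≤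
        ENNReal.ofReal (Cbar * a ^ (2 - α))) :
    ∀ γ : ℝ, α < γ → γ < 2 → ∀ a : ℝ, 0 < a →
      ∫⁻ z in Set.Icc (-a) a, ENNReal.ofReal (|z| ^ γ) ∂ρ ≤
        ENNReal.ofReal
          ((2 : ℝ) ^ (-γ + 2) * (2 : ℝ) ^ (2 - α) / ((2 : ℝ) ^ (γ - α) - 1) * Cbar *
            a ^ (γ - α)) := by
  intro γ hαγ hγ2 a ha
  set q : ℝ := 2 ^ (γ - α)
  set K : ℝ := 2 ^ (2 - γ) * a ^ (γ - α)
  have hq : 1 < q := Real.one_lt_rpow one_lt_two (sub_pos.mpr hαγ)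
  have hH : ∀ c, 0 < c → ∫⁻ z in Icc (-c) c, ENNReal.ofReal (|z| ^ 2) ∂ρ ≤
      ENNReal.ofReal (Cbar * c ^ (2 - α)) := fun c hc =>
    setLIntegral_Icc_le_of_forall_Ioo_le
      (ENNReal.continuous_ofReal.continuousAt.comp (continuousAt_const.mul
        (Real.continuousAt_rpow_const _ _ (Or.inl hc.ne')))).continuousWithinAt
      fun b hb => H b (hc.trans hb)
  have hshell : ∀ n, ∫⁻ z in dyadicShell a n, ENNReal.ofReal (|z| ^ γ) ∂ρ ≤
      ENNReal.ofReal Cbar * ENNReal.ofReal (K * q⁻¹ ^ n) := fun n => by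
    refine (setLIntegral_dyadicShell_rpow_le ha hγ2.le n (hH _ (by positivity))).trans_eq ?_
    rw [ENNReal.ofReal_mul' (by positivity), mul_left_comm, ← ENNReal.ofReal_mul (by positivity),
      dyadic_rpow_mul_rpow_eq ha]
  calc ∫⁻ z in Icc (-a) a, ENNReal.ofReal (|z| ^ γ) ∂ρ
      ≤ ∑' n, ∫⁻ z in dyadicShell a n, ENNReal.ofReal (|z| ^ γ) ∂ρ :=
        setLIntegral_Icc_le_tsum_dyadicShell (by simp [Real.zero_rpow (hα.trans hαγ).ne']) a
    _ ≤ ∑' n, ENNReal.ofReal Cbar * ENNReal.ofReal (K * q⁻¹ ^ n) := ENNReal.tsum_le_tsum hshell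
    _ = ENNReal.ofReal Cbar * ENNReal.ofReal (K / (q - 1) * q) := by
        rw [ENNReal.tsum_mul_left, tsum_ofReal_mul_inv_pow (by positivity) hq]
    _ ≤ ENNReal.ofReal Cbar * ENNReal.ofReal (K / (q - 1) * 2 ^ (2 - α)) := by
        gcongr
        exact Real.rpow_le_rpow_of_exponent_le one_le_two (by linarith)
    _ = _ := by
        rw [← ENNReal.ofReal_mul' (by positivity), neg_add_eq_sub]
        congr 1
        ring

/-- moment estimate for a Lévy-type measure under the small-jump condition. -/
theorem statement1 (ρ : Measure ℝ) (α Cbar : ℝ)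
    (hα : 0 < α) (hα2 : α < 2) (hCbar : 0 ≤ Cbar)
    (H : ∀ a : ℝ, 0 < a →
      ∫⁻ z in Set.Ioo (-a) a, ENNReal.ofReal (|z| ^ (2 : ℕ)) ∂ρ ≤
        ENNReal.ofReal (Cbar * a ^ (2 - α))) :
    ∀ γ : ℝ, α < γ → γ < 2 → ∀ a : ℝ, 0 < a →
      ∫⁻ z in Set.Icc (-a) a, ENNReal.ofReal (|z| ^ γ) ∂ρ ≤
        ENNReal.ofReal
          ((2 : ℝ) ^ (-γ + 2) * (2 : ℝ) ^ (2 - α) / ((2 : ℝ) ^ (γ - α) - 1) * Cbar *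
            a ^ (γ - α)) :=
  statement1_general ρ α Cbar hα H
end

section
/- Let ρ be a nonnegative Borel measure on ℝ, let α ∈ (0,2), and let C_0, C̄ ≥ 0 be constants such that for every a > 0 one has ρ({z : |z| ≥ a}) ≤ C_0 a^{−α} and ∫_{(−a,a)} |z|^2 ρ(dz) ≤ C̄ a^{2−α}. Then for every ξ ∈ ℝ with ξ ≠ 0, ∫_ℝ (1 − cos(ξ z)) ρ(dz) ≤ 2 (C̄ + C_0) |ξ|^α. -/
/-!
Split the line at the radius `|ξ|⁻¹`. Inside, `1 - cos (ξ z) ≤ ξ² z² / 2`, and the second-moment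
bound at `a = |ξ|⁻¹` contributes `(C̄ / 2) |ξ|^α`. Outside, `1 - cos (ξ z) ≤ 2`, and the tail bound
contributes `2 C₀ |ξ|^α`.
-/

open MeasureTheory

lemma Real.one_sub_cos_le_sq_div_two (x : ℝ) : 1 - Real.cos x ≤ x ^ 2 / 2 := by
  linarith [Real.one_sub_sq_div_two_le_cos (x := x)]

lemma Real.one_sub_cos_le_two (x : ℝ) : 1 - Real.cos x ≤ 2 := by
  linarith [Real.neg_one_le_cos x]

lemma Set.compl_Ioo_neg_self (a : ℝ) : (Set.Ioo (-a) a)ᶜ = {z : ℝ | a ≤ |z|} := by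
  ext z
  simp [abs_lt, ← not_lt]

section OneSubCos

variable {μ : Measure ℝ} (ξ : ℝ)

lemma lintegral_one_sub_cos_le_mul_lintegral_sq :
    ∫⁻ z, ENNReal.ofReal (1 - Real.cos (ξ * z)) ∂μ ≤
      ENNReal.ofReal (ξ ^ 2 / 2) * ∫⁻ z, ENNReal.ofReal (|z| ^ (2 : ℕ)) ∂μ := by
  rw [← lintegral_const_mul' _ _ ENNReal.ofReal_ne_top]
  refine lintegral_mono fun z => ?_
  rw [← ENNReal.ofReal_mul (by positivity), sq_abs]
  exact ENNReal.ofReal_le_ofReal <| (Real.one_sub_cos_le_sq_div_two _).trans_eq (by ring)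

lemma lintegral_one_sub_cos_le_two_mul_measure_univ :
    ∫⁻ z, ENNReal.ofReal (1 - Real.cos (ξ * z)) ∂μ ≤ 2 * μ Set.univ := by
  calc ∫⁻ z, ENNReal.ofReal (1 - Real.cos (ξ * z)) ∂μ ≤ ∫⁻ _, 2 ∂μ :=
        lintegral_mono fun z => by
          simpa using ENNReal.ofReal_le_ofReal (Real.one_sub_cos_le_two (ξ * z))
    _ = 2 * μ Set.univ := lintegral_const 2

end OneSubCos

lemma inv_abs_rpow_neg (ξ α : ℝ) : (|ξ|⁻¹) ^ (-α) = |ξ| ^ α := by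
  rw [Real.inv_rpow (abs_nonneg ξ), ← Real.rpow_neg (abs_nonneg ξ), neg_neg]

lemma sq_mul_inv_abs_rpow_two_sub {ξ : ℝ} (hξ : ξ ≠ 0) (α : ℝ) :
    ξ ^ 2 * (|ξ|⁻¹) ^ (2 - α) = |ξ| ^ α := by
  have hm : 0 < |ξ| := abs_pos.mpr hξ
  rw [Real.inv_rpow hm.le, ← Real.rpow_neg hm.le, ← sq_abs, ← Real.rpow_natCast,
    ← Real.rpow_add hm]
  norm_num

theorem statement9_general (ρ : Measure ℝ) (α C0 Cbar : ℝ)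
    (hC0 : 0 ≤ C0) (hCbar : 0 ≤ Cbar)
    (H1 : ∀ a : ℝ, 0 < a → ρ {z : ℝ | a ≤ |z|} ≤ ENNReal.ofReal (C0 * a ^ (-α)))
    (H2 : ∀ a : ℝ, 0 < a →
      ∫⁻ z in Set.Ioo (-a) a, ENNReal.ofReal (|z| ^ (2 : ℕ)) ∂ρ ≤
        ENNReal.ofReal (Cbar * a ^ (2 - α))) :
    ∀ ξ : ℝ, ξ ≠ 0 →
      ∫⁻ z, ENNReal.ofReal (1 - Real.cos (ξ * z)) ∂ρ ≤
        ENNReal.ofReal (2 * (Cbar + C0) * |ξ| ^ α) := by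
  intro ξ hξ
  have ha : 0 < |ξ|⁻¹ := inv_pos.mpr (abs_pos.mpr hξ)
  have hpow : 0 ≤ |ξ| ^ α := by positivity
  have hinner := (lintegral_one_sub_cos_le_mul_lintegral_sq
    (μ := ρ.restrict (Set.Ioo (-|ξ|⁻¹) |ξ|⁻¹)) ξ).trans (mul_le_mul_right (H2 _ ha) _)
  have houter := (lintegral_one_sub_cos_le_two_mul_measure_univ
    (μ := ρ.restrict (Set.Ioo (-|ξ|⁻¹) |ξ|⁻¹)ᶜ) ξ).trans_eq
    (by rw [Measure.restrict_apply_univ, Set.compl_Ioo_neg_self])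
  calc ∫⁻ z, ENNReal.ofReal (1 - Real.cos (ξ * z)) ∂ρ
      = ∫⁻ z in Set.Ioo (-|ξ|⁻¹) |ξ|⁻¹, ENNReal.ofReal (1 - Real.cos (ξ * z)) ∂ρ +
          ∫⁻ z in (Set.Ioo (-|ξ|⁻¹) |ξ|⁻¹)ᶜ, ENNReal.ofReal (1 - Real.cos (ξ * z)) ∂ρ :=
        (lintegral_add_compl _ measurableSet_Ioo).symm
    _ ≤ ENNReal.ofReal (ξ ^ 2 / 2) * ENNReal.ofReal (Cbar * |ξ|⁻¹ ^ (2 - α)) +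
          2 * ENNReal.ofReal (C0 * |ξ|⁻¹ ^ (-α)) :=
        add_le_add hinner (houter.trans (mul_le_mul_right (H1 _ ha) _))
    _ = ENNReal.ofReal (Cbar / 2 * |ξ| ^ α + 2 * C0 * |ξ| ^ α) := by
        rw [← ENNReal.ofReal_mul (by positivity), ← ENNReal.ofReal_ofNat 2,
          ← ENNReal.ofReal_mul zero_le_two, ← ENNReal.ofReal_add (by positivity) (by positivity)]
        congr 1
        linear_combination
          Cbar / 2 * sq_mul_inv_abs_rpow_two_sub hξ α + 2 * C0 * inv_abs_rpow_neg ξ α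
    _ ≤ ENNReal.ofReal (2 * (Cbar + C0) * |ξ| ^ α) :=
        ENNReal.ofReal_le_ofReal (by nlinarith [mul_nonneg hCbar hpow])

/-- upper bound on the real part of the characteristic exponent,
`∫ (1 − cos(ξz)) ρ(dz) ≤ 2(C̄ + C₀)|ξ|^α`. -/
theorem statement9 (ρ : Measure ℝ) (α C0 Cbar : ℝ)
    (hα : 0 < α) (hα2 : α < 2) (hC0 : 0 ≤ C0) (hCbar : 0 ≤ Cbar)
    (H1 : ∀ a : ℝ, 0 < a → ρ {z : ℝ | a ≤ |z|} ≤ ENNReal.ofReal (C0 * a ^ (-α)))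
    (H2 : ∀ a : ℝ, 0 < a →
      ∫⁻ z in Set.Ioo (-a) a, ENNReal.ofReal (|z| ^ (2 : ℕ)) ∂ρ ≤
        ENNReal.ofReal (Cbar * a ^ (2 - α))) :
    ∀ ξ : ℝ, ξ ≠ 0 →
      ∫⁻ z, ENNReal.ofReal (1 - Real.cos (ξ * z)) ∂ρ ≤
        ENNReal.ofReal (2 * (Cbar + C0) * |ξ| ^ α) :=
  statement9_general ρ α C0 Cbar hC0 hCbar H1 H2
end
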